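/- Fix matching values v_{jk} ≥ 0 and holding cost rates c_j^D ≥ 0 (j ∈ J) and c_k^S ≥ 0 (k ∈ K), and define the matching-problem objective Φ(m) = Σ_{j,k} v_{jk} m_{jk} − Σ_j c_j^D q*_j(m) − Σ_k c_k^S i*_k(m) for m ∈ 𝕄(λ,μ). If all demand and supply patience distributions have nondecreasing hazard rates on their supports, then Φ is a convex function on 𝕄(λ,μ); if all hazard rates are nonincreasing, then Φ is a concave function on 𝕄(λ,μ). -/

import Mathlib

open MeasureTheory

/-- A patience time distribution: a cdf `G` on `[0,∞)` with `G 0 = 0`, density `g`,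
finite mean `1/θ`, strictly increasing from its support onto `[0,1)`. -/
structure PatienceDist where
  G : ℝ → ℝ
  g : ℝ → ℝ
  θ : ℝ
  theta_pos : 0 < θ
  G_zero : G 0 = 0
  mono : Monotone G
  nonneg : ∀ x, 0 ≤ G x
  le_one : ∀ x, G x ≤ 1
  g_nonneg : ∀ x, 0 ≤ g x
  density : ∀ x, 0 ≤ x → G x = ∫ u in (0:ℝ)..x, g u
  mean : (∫ u in Set.Ioi (0:ℝ), (1 - G u)) = 1 / θ
  strictMono_support : ∀ ⦃x y : ℝ⦄, 0 ≤ x → x < y → G y < 1 → G x < G y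
  surj_support : ∀ y, 0 ≤ y → y < 1 → ∃ x, 0 ≤ x ∧ G x = y

namespace PatienceDist

/-- The inverse of the cdf from `[0,1)` onto the support. -/
noncomputable def inv (P : PatienceDist) (y : ℝ) : ℝ :=
  sInf {x | 0 ≤ x ∧ P.G x = y}

/-- The excess life distribution `G_e(x) = θ ∫₀ˣ (1 - G u) du`. -/
noncomputable def Ge (P : PatienceDist) (x : ℝ) : ℝ :=
  P.θ * ∫ u in (0:ℝ)..x, (1 - P.G u)

/-- The hazard rate `h(x) = g(x) / (1 - G(x))`. -/
noncomputable def hazard (P : PatienceDist) (x : ℝ) : ℝ :=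
  P.g x / (1 - P.G x)

/-- The hazard rate is nondecreasing on the support. -/
def HazardNondec (P : PatienceDist) : Prop :=
  ∀ ⦃x y : ℝ⦄, 0 ≤ x → x ≤ y → P.G y < 1 → P.hazard x ≤ P.hazard y

/-- The hazard rate is strictly increasing on the support. -/
def HazardStrictInc (P : PatienceDist) : Prop :=
  ∀ ⦃x y : ℝ⦄, 0 ≤ x → x < y → P.G y < 1 → P.hazard x < P.hazard y

/-- The hazard rate is nonincreasing on the support. -/
def HazardNoninc (P : PatienceDist) : Prop :=
  ∀ ⦃x y : ℝ⦄, 0 ≤ x → x ≤ y → P.G y < 1 → P.hazard y ≤ P.hazard x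

/-- The hazard rate is strictly decreasing on the support. -/
def HazardStrictDec (P : PatienceDist) : Prop :=
  ∀ ⦃x y : ℝ⦄, 0 ≤ x → x < y → P.G y < 1 → P.hazard y < P.hazard x

end PatienceDist

namespace PatienceDist

variable (P : PatienceDist)

lemma G_pos {x : ℝ} (hx : 0 < x) : 0 < P.G x := by
  rcases lt_or_eq_of_le (P.le_one x) with h | h
  · have := P.strictMono_support le_rfl hx h
    rwa [P.G_zero] at this
  · rw [h]; norm_num

lemma hazard_nonneg {x : ℝ} (hx : P.G x < 1) : 0 ≤ P.hazard x :=
  div_nonneg (P.g_nonneg x) (by linarith)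

lemma g_eq {u : ℝ} (hu : P.G u < 1) : P.g u = P.hazard u * (1 - P.G u) := by
  rw [hazard, div_mul_cancel₀]
  intro h; linarith [sub_eq_zero.mp h]

lemma intble_g {x : ℝ} (hx : 0 ≤ x) : IntervalIntegrable P.g volume 0 x := by
  rcases eq_or_lt_of_le hx with h | h
  · simp [← h]
  · by_contra hc
    have hd := P.density x hx
    rw [intervalIntegral.integral_undef hc] at hd
    exact absurd hd (P.G_pos h).ne'

lemma intble_g' {a b : ℝ} (ha : 0 ≤ a) (hb : 0 ≤ b) :
    IntervalIntegrable P.g volume a b := by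
  have hM : (0:ℝ) ≤ max a b := le_max_of_le_left ha
  refine (P.intble_g hM).mono_set (Set.uIcc_subset_uIcc ?_ ?_)
  · rw [Set.uIcc_of_le hM]; exact ⟨ha, le_max_left a b⟩
  · rw [Set.uIcc_of_le hM]; exact ⟨hb, le_max_right a b⟩

lemma intble_oneSubG (a b : ℝ) :
    IntervalIntegrable (fun u => 1 - P.G u) volume a b :=
  AntitoneOn.intervalIntegrable (fun x _ y _ hxy => sub_le_sub_left (P.mono hxy) 1)

lemma integrableOn_oneSubG :
    IntegrableOn (fun u => 1 - P.G u) (Set.Ioi (0:ℝ)) volume := by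
  by_contra hc
  have h := P.mean
  rw [MeasureTheory.integral_undef hc] at h
  exact absurd h.symm (one_div_ne_zero P.theta_pos.ne')

lemma integrableOn_oneSubG' {a : ℝ} (ha : 0 ≤ a) :
    IntegrableOn (fun u => 1 - P.G u) (Set.Ioi a) volume :=
  P.integrableOn_oneSubG.mono_set (Set.Ioi_subset_Ioi ha)

lemma G_sub {a b : ℝ} (ha : 0 ≤ a) (hab : a ≤ b) :
    P.G b - P.G a = ∫ u in a..b, P.g u := by
  have h : (∫ u in (0:ℝ)..a, P.g u) + ∫ u in a..b, P.g u = ∫ u in (0:ℝ)..b, P.g u :=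
    intervalIntegral.integral_add_adjacent_intervals (P.intble_g ha)
      (P.intble_g' ha (ha.trans hab))
  rw [P.density a ha, P.density b (ha.trans hab), ← h]; ring

lemma Ge_sub (a b : ℝ) :
    P.Ge b - P.Ge a = P.θ * ∫ u in a..b, (1 - P.G u) := by
  have h : (∫ u in (0:ℝ)..a, (1 - P.G u)) + ∫ u in a..b, (1 - P.G u)
      = ∫ u in (0:ℝ)..b, (1 - P.G u) :=
    intervalIntegral.integral_add_adjacent_intervals (P.intble_oneSubG 0 a)
      (P.intble_oneSubG a b)
  rw [Ge, Ge, ← h]; ring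

lemma inv_spec {y : ℝ} (h0 : 0 ≤ y) (h1 : y < 1) :
    0 ≤ P.inv y ∧ P.G (P.inv y) = y := by
  obtain ⟨x, hx0, hGx⟩ := P.surj_support y h0 h1
  have hset : {t : ℝ | 0 ≤ t ∧ P.G t = y} = {x} := by
    ext t
    simp only [Set.mem_setOf_eq, Set.mem_singleton_iff]
    constructor
    · rintro ⟨ht0, hGt⟩
      by_contra hne
      rcases lt_or_gt_of_ne hne with h | h
      · have := P.strictMono_support ht0 h (by rw [hGx]; exact h1)
        rw [hGt, hGx] at this; exact lt_irrefl y this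
      · have := P.strictMono_support hx0 h (by rw [hGt]; exact h1)
        rw [hGt, hGx] at this; exact lt_irrefl y this
    · rintro rfl; exact ⟨hx0, hGx⟩
  rw [inv, hset, csInf_singleton]
  exact ⟨hx0, hGx⟩

lemma inv_lt_inv {y z : ℝ} (h0 : 0 ≤ y) (hyz : y < z) (h1 : z < 1) :
    P.inv y < P.inv z := by
  obtain ⟨hy0, hGy⟩ := P.inv_spec h0 (hyz.trans h1)
  obtain ⟨hz0, hGz⟩ := P.inv_spec (h0.trans hyz.le) h1
  by_contra hc
  push_neg at hc
  have h := P.mono hc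
  rw [hGy, hGz] at h
  exact absurd h (not_le.mpr hyz)

end PatienceDist
namespace PatienceDist

variable (P : PatienceDist)

lemma int_g_le_nondec (hP : P.HazardNondec) {x1 x2 : ℝ} (h1 : 0 ≤ x1) (h12 : x1 ≤ x2)
    (hG2 : P.G x2 < 1) :
    (∫ u in x1..x2, P.g u) ≤ P.hazard x2 * ∫ u in x1..x2, (1 - P.G u) := by
  rw [← intervalIntegral.integral_const_mul]
  apply intervalIntegral.integral_mono_on h12 (P.intble_g' h1 (h1.trans h12))
    ((P.intble_oneSubG x1 x2).const_mul _)
  intro u hu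
  have hGu : P.G u < 1 := lt_of_le_of_lt (P.mono hu.2) hG2
  rw [P.g_eq hGu]
  exact mul_le_mul_of_nonneg_right (hP (h1.trans hu.1) hu.2 hG2) (by linarith)

lemma int_g_ge_nondec (hP : P.HazardNondec) {x2 x3 : ℝ} (h2 : 0 ≤ x2) (h23 : x2 ≤ x3)
    (hG2 : P.G x2 < 1) :
    P.hazard x2 * (∫ u in x2..x3, (1 - P.G u)) ≤ ∫ u in x2..x3, P.g u := by
  rw [← intervalIntegral.integral_const_mul]
  apply intervalIntegral.integral_mono_on h23 ((P.intble_oneSubG x2 x3).const_mul _)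
    (P.intble_g' h2 (h2.trans h23))
  intro u hu
  rcases lt_or_eq_of_le (P.le_one u) with hGu | hGu
  · rw [P.g_eq hGu]
    exact mul_le_mul_of_nonneg_right (hP h2 hu.1 hGu) (by linarith)
  · rw [hGu]; simpa using P.g_nonneg u

lemma int_tail_le_nondec (hP : P.HazardNondec) {x2 : ℝ} (h2 : 0 ≤ x2) (hG2 : P.G x2 < 1) :
    P.hazard x2 * (∫ u in Set.Ioi x2, (1 - P.G u)) ≤ 1 - P.G x2 := by
  have hint := P.integrableOn_oneSubG' h2
  have htend : Filter.Tendsto (fun b => P.hazard x2 * ∫ u in x2..b, (1 - P.G u))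
      Filter.atTop (nhds (P.hazard x2 * ∫ u in Set.Ioi x2, (1 - P.G u))) :=
    (MeasureTheory.intervalIntegral_tendsto_integral_Ioi x2 hint Filter.tendsto_id).const_mul _
  refine le_of_tendsto htend ?_
  filter_upwards [Filter.eventually_ge_atTop x2] with b hb
  calc P.hazard x2 * ∫ u in x2..b, (1 - P.G u) ≤ ∫ u in x2..b, P.g u :=
        P.int_g_ge_nondec hP h2 hb hG2
    _ = P.G b - P.G x2 := (P.G_sub h2 hb).symm
    _ ≤ 1 - P.G x2 := by linarith [P.le_one b]

lemma int_g_ge_noninc (hP : P.HazardNoninc) {x1 x2 : ℝ} (h1 : 0 ≤ x1) (h12 : x1 ≤ x2)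
    (hG2 : P.G x2 < 1) :
    P.hazard x2 * (∫ u in x1..x2, (1 - P.G u)) ≤ ∫ u in x1..x2, P.g u := by
  rw [← intervalIntegral.integral_const_mul]
  apply intervalIntegral.integral_mono_on h12 ((P.intble_oneSubG x1 x2).const_mul _)
    (P.intble_g' h1 (h1.trans h12))
  intro u hu
  have hGu : P.G u < 1 := lt_of_le_of_lt (P.mono hu.2) hG2
  rw [P.g_eq hGu]
  exact mul_le_mul_of_nonneg_right (hP (h1.trans hu.1) hu.2 hG2) (by linarith)

lemma int_g_le_noninc (hP : P.HazardNoninc) {x2 x3 : ℝ} (h2 : 0 ≤ x2) (h23 : x2 ≤ x3)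
    (hG3 : P.G x3 < 1) :
    (∫ u in x2..x3, P.g u) ≤ P.hazard x2 * ∫ u in x2..x3, (1 - P.G u) := by
  rw [← intervalIntegral.integral_const_mul]
  apply intervalIntegral.integral_mono_on h23 (P.intble_g' h2 (h2.trans h23))
    ((P.intble_oneSubG x2 x3).const_mul _)
  intro u hu
  have hGu : P.G u < 1 := lt_of_le_of_lt (P.mono hu.2) hG3
  rw [P.g_eq hGu]
  exact mul_le_mul_of_nonneg_right (hP h2 hu.1 hGu) (by linarith)

lemma tail_nonneg (x2 : ℝ) : 0 ≤ ∫ u in Set.Ioi x2, (1 - P.G u) :=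
  MeasureTheory.setIntegral_nonneg measurableSet_Ioi (fun u _ => by linarith [P.le_one u])

lemma int_tail_ge_noninc (hP : P.HazardNoninc) {x2 : ℝ} (h2 : 0 ≤ x2) (hG2 : P.G x2 < 1) :
    1 - P.G x2 ≤ P.hazard x2 * (∫ u in Set.Ioi x2, (1 - P.G u)) := by
  refine le_of_forall_pos_le_add (fun ε hε => ?_)
  rcases le_or_gt (1 - ε) (P.G x2) with hc | hc
  · have h0 : 0 ≤ P.hazard x2 * ∫ u in Set.Ioi x2, (1 - P.G u) :=
      mul_nonneg (P.hazard_nonneg hG2) (P.tail_nonneg x2)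
    linarith
  · -- take x3 = inv (1 - ε)
    have hy0 : (0:ℝ) ≤ 1 - ε := le_trans (P.nonneg x2) hc.le
    have hy1 : (1:ℝ) - ε < 1 := by linarith
    obtain ⟨hx30, hGx3⟩ := P.inv_spec hy0 hy1
    set x3 := P.inv (1 - ε)
    have h23 : x2 ≤ x3 := by
      by_contra hcc
      push_neg at hcc
      have := P.mono hcc.le
      rw [hGx3] at this
      linarith
    have hle : (1 - ε) - P.G x2 ≤ P.hazard x2 * ∫ u in x2..x3, (1 - P.G u) := by
      have := P.int_g_le_noninc hP h2 h23 (by rw [hGx3]; exact hy1)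
      rw [← P.G_sub h2 h23, hGx3] at this
      exact this
    have hmono : (∫ u in x2..x3, (1 - P.G u)) ≤ ∫ u in Set.Ioi x2, (1 - P.G u) := by
      rw [intervalIntegral.integral_of_le h23]
      refine MeasureTheory.setIntegral_mono_set (P.integrableOn_oneSubG' h2) ?_ ?_
      · filter_upwards with u using by simp only [Pi.zero_apply]; linarith [P.le_one u]
      · exact (Set.Ioc_subset_Ioi_self).eventuallyLE
    have := mul_le_mul_of_nonneg_left hmono (P.hazard_nonneg hG2)
    linarith

end PatienceDist
namespace PatienceDist

/-- `Psi y = Ge (inv y)` for `y < 1`, extended by `Psi 1 = 1`. -/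
noncomputable def Psi (P : PatienceDist) (y : ℝ) : ℝ :=
  if y = 1 then 1 else P.Ge (P.inv y)

variable (P : PatienceDist)

lemma Psi_one : P.Psi 1 = 1 := if_pos rfl

lemma Psi_ne {y : ℝ} (h : y ≠ 1) : P.Psi y = P.Ge (P.inv y) := if_neg h

lemma Psi_sub {y1 y2 : ℝ} (h0 : 0 ≤ y1) (h12 : y1 ≤ y2) (h1 : y2 < 1) :
    P.Psi y2 - P.Psi y1 = P.θ * ∫ u in (P.inv y1)..(P.inv y2), (1 - P.G u) := by
  rw [P.Psi_ne h1.ne, P.Psi_ne (h12.trans_lt h1).ne, P.Ge_sub]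

lemma Psi_one_sub {y2 : ℝ} (h0 : 0 ≤ y2) (h1 : y2 < 1) :
    P.Psi 1 - P.Psi y2 = P.θ * ∫ u in Set.Ioi (P.inv y2), (1 - P.G u) := by
  obtain ⟨hx20, hGx2⟩ := P.inv_spec h0 h1
  set x2 := P.inv y2
  have hsplit : (∫ u in Set.Ioc (0:ℝ) x2, (1 - P.G u)) + ∫ u in Set.Ioi x2, (1 - P.G u)
      = ∫ u in Set.Ioi (0:ℝ), (1 - P.G u) := by
    rw [← MeasureTheory.setIntegral_union (Set.Ioc_disjoint_Ioi le_rfl) measurableSet_Ioi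
      ((P.intble_oneSubG 0 x2).1) (P.integrableOn_oneSubG' hx20),
      Set.Ioc_union_Ioi_eq_Ioi hx20]
  rw [P.Psi_one, P.Psi_ne h1.ne, Ge, intervalIntegral.integral_of_le hx20]
  have hm : P.θ * ((∫ u in Set.Ioc (0:ℝ) x2, (1 - P.G u)) + ∫ u in Set.Ioi x2, (1 - P.G u))
      = 1 := by
    rw [hsplit, P.mean, mul_one_div]
    exact div_self P.theta_pos.ne'
  linear_combination (-1 : ℝ) * hm

end PatienceDist
namespace PatienceDist

variable (P : PatienceDist)

lemma psi_concaveOn (hP : P.HazardNondec) : ConcaveOn ℝ (Set.Icc (0:ℝ) 1) P.Psi := by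
  apply concaveOn_of_slope_anti_adjacent (convex_Icc 0 1)
  intro y1 y2 y3 hy1 hy3 h12 h23
  have hy10 : 0 ≤ y1 := hy1.1
  have h2lt : y2 < 1 := lt_of_lt_of_le h23 hy3.2
  have h1lt : y1 < 1 := h12.trans h2lt
  have hy20 : 0 ≤ y2 := hy10.trans h12.le
  obtain ⟨hx10, hGx1⟩ := P.inv_spec hy10 h1lt
  obtain ⟨hx20, hGx2⟩ := P.inv_spec hy20 h2lt
  set x1 := P.inv y1
  set x2 := P.inv y2
  have hx12 : x1 ≤ x2 := (P.inv_lt_inv hy10 h12 h2lt).le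
  set A := ∫ u in x1..x2, (1 - P.G u) with hA
  have hAnn : 0 ≤ A :=
    intervalIntegral.integral_nonneg hx12 (fun u _ => by linarith [P.le_one u])
  have hPsi12 : P.Psi y2 - P.Psi y1 = P.θ * A := P.Psi_sub hy10 h12.le h2lt
  have hGsub : P.G x2 < 1 := by rw [hGx2]; exact h2lt
  have hB : y2 - y1 ≤ P.hazard x2 * A := by
    have h := P.int_g_le_nondec hP hx10 hx12 hGsub
    rwa [← P.G_sub hx10 hx12, hGx1, hGx2] at h
  have hh : 0 ≤ P.hazard x2 := P.hazard_nonneg hGsub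
  have hθ : 0 ≤ P.θ := P.theta_pos.le
  rcases lt_or_eq_of_le hy3.2 with h3lt | h3eq
  · obtain ⟨hx30, hGx3⟩ := P.inv_spec (hy20.trans h23.le) h3lt
    set x3 := P.inv y3
    have hx23 : x2 ≤ x3 := (P.inv_lt_inv hy20 h23 h3lt).le
    set C := ∫ u in x2..x3, (1 - P.G u) with hC
    have hCnn : 0 ≤ C :=
      intervalIntegral.integral_nonneg hx23 (fun u _ => by linarith [P.le_one u])
    have hPsi23 : P.Psi y3 - P.Psi y2 = P.θ * C := P.Psi_sub hy20 h23.le h3lt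
    have hD : P.hazard x2 * C ≤ y3 - y2 := by
      have h := P.int_g_ge_nondec hP hx20 hx23 hGsub
      rwa [← P.G_sub hx20 hx23, hGx2, hGx3] at h
    rw [hPsi12, hPsi23, div_le_div_iff₀ (by linarith) (by linarith)]
    nlinarith [mul_le_mul_of_nonneg_left hB (mul_nonneg hθ hCnn),
      mul_le_mul_of_nonneg_left hD (mul_nonneg hθ hAnn)]
  · subst h3eq
    set C := ∫ u in Set.Ioi x2, (1 - P.G u) with hC
    have hCnn : 0 ≤ C := P.tail_nonneg x2
    have hPsi23 : P.Psi 1 - P.Psi y2 = P.θ * C := P.Psi_one_sub hy20 h2lt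
    have hD : P.hazard x2 * C ≤ 1 - y2 := by
      have h := P.int_tail_le_nondec hP hx20 hGsub
      rwa [hGx2] at h
    rw [hPsi12, hPsi23, div_le_div_iff₀ (by linarith) (by linarith)]
    nlinarith [mul_le_mul_of_nonneg_left hB (mul_nonneg hθ hCnn),
      mul_le_mul_of_nonneg_left hD (mul_nonneg hθ hAnn)]

lemma psi_convexOn (hP : P.HazardNoninc) : ConvexOn ℝ (Set.Icc (0:ℝ) 1) P.Psi := by
  apply convexOn_of_slope_mono_adjacent (convex_Icc 0 1)
  intro y1 y2 y3 hy1 hy3 h12 h23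
  have hy10 : 0 ≤ y1 := hy1.1
  have h2lt : y2 < 1 := lt_of_lt_of_le h23 hy3.2
  have h1lt : y1 < 1 := h12.trans h2lt
  have hy20 : 0 ≤ y2 := hy10.trans h12.le
  obtain ⟨hx10, hGx1⟩ := P.inv_spec hy10 h1lt
  obtain ⟨hx20, hGx2⟩ := P.inv_spec hy20 h2lt
  set x1 := P.inv y1
  set x2 := P.inv y2
  have hx12 : x1 ≤ x2 := (P.inv_lt_inv hy10 h12 h2lt).le
  set A := ∫ u in x1..x2, (1 - P.G u) with hA
  have hAnn : 0 ≤ A :=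
    intervalIntegral.integral_nonneg hx12 (fun u _ => by linarith [P.le_one u])
  have hPsi12 : P.Psi y2 - P.Psi y1 = P.θ * A := P.Psi_sub hy10 h12.le h2lt
  have hGsub : P.G x2 < 1 := by rw [hGx2]; exact h2lt
  have hB : P.hazard x2 * A ≤ y2 - y1 := by
    have h := P.int_g_ge_noninc hP hx10 hx12 hGsub
    rwa [← P.G_sub hx10 hx12, hGx1, hGx2] at h
  have hh : 0 ≤ P.hazard x2 := P.hazard_nonneg hGsub
  have hθ : 0 ≤ P.θ := P.theta_pos.le
  rcases lt_or_eq_of_le hy3.2 with h3lt | h3eq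
  · obtain ⟨hx30, hGx3⟩ := P.inv_spec (hy20.trans h23.le) h3lt
    set x3 := P.inv y3
    have hx23 : x2 ≤ x3 := (P.inv_lt_inv hy20 h23 h3lt).le
    set C := ∫ u in x2..x3, (1 - P.G u) with hC
    have hCnn : 0 ≤ C :=
      intervalIntegral.integral_nonneg hx23 (fun u _ => by linarith [P.le_one u])
    have hPsi23 : P.Psi y3 - P.Psi y2 = P.θ * C := P.Psi_sub hy20 h23.le h3lt
    have hD : y3 - y2 ≤ P.hazard x2 * C := by
      have h := P.int_g_le_noninc hP hx20 hx23 (by rw [hGx3]; exact h3lt)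
      rwa [← P.G_sub hx20 hx23, hGx2, hGx3] at h
    rw [hPsi12, hPsi23, div_le_div_iff₀ (by linarith) (by linarith)]
    nlinarith [mul_le_mul_of_nonneg_left hB (mul_nonneg hθ hCnn),
      mul_le_mul_of_nonneg_left hD (mul_nonneg hθ hAnn)]
  · subst h3eq
    set C := ∫ u in Set.Ioi x2, (1 - P.G u) with hC
    have hCnn : 0 ≤ C := P.tail_nonneg x2
    have hPsi23 : P.Psi 1 - P.Psi y2 = P.θ * C := P.Psi_one_sub hy20 h2lt
    have hD : 1 - y2 ≤ P.hazard x2 * C := by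
      have h := P.int_tail_ge_noninc hP hx20 hGsub
      rwa [hGx2] at h
    rw [hPsi12, hPsi23, div_le_div_iff₀ (by linarith) (by linarith)]
    nlinarith [mul_le_mul_of_nonneg_left hB (mul_nonneg hθ hCnn),
      mul_le_mul_of_nonneg_left hD (mul_nonneg hθ hAnn)]

end PatienceDist

/-- Invariant queue length as a function of the total matching rate `s`:
`λ/θ` if `s = 0`, and `(λ/θ) G_e (G⁻¹ (1 - s/λ))` otherwise. -/
noncomputable def qstarFun (lam : ℝ) (P : PatienceDist) (s : ℝ) : ℝ :=
  if s = 0 then lam / P.θ else (lam / P.θ) * P.Ge (P.inv (1 - s / lam))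

/-- The feasible set of matching rates `𝕄(λ,μ)`. -/
def Mset {J K : Type*} [Fintype J] [Fintype K] (lam : J → ℝ) (mu : K → ℝ) :
    Set (J × K → ℝ) :=
  {m | (∀ p, 0 ≤ m p) ∧ (∀ j, ∑ k : K, m (j, k) ≤ lam j) ∧
    (∀ k, ∑ j : J, m (j, k) ≤ mu k)}

/-- The matching-problem objective
`Φ(m) = Σ v_{jk} m_{jk} − Σ_j c_j^D q*_j(m) − Σ_k c_k^S i*_k(m)`. -/
noncomputable def Phi {J K : Type*} [Fintype J] [Fintype K]
    (v : J × K → ℝ) (cD : J → ℝ) (cS : K → ℝ) (lam : J → ℝ) (mu : K → ℝ)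
    (GD : J → PatienceDist) (GS : K → PatienceDist) (m : J × K → ℝ) : ℝ :=
  (∑ p : J × K, v p * m p)
    - (∑ j : J, cD j * qstarFun (lam j) (GD j) (∑ k : K, m (j, k)))
    - (∑ k : K, cS k * qstarFun (mu k) (GS k) (∑ j : J, m (j, k)))

namespace PatienceDist

variable (P : PatienceDist)

lemma qstar_eq {lam s : ℝ} (hlam : 0 < lam) (hs : 0 ≤ s) :
    qstarFun lam P s = (lam / P.θ) * P.Psi (1 - s / lam) := by
  rcases eq_or_lt_of_le hs with h | h
  · rw [qstarFun, if_pos h.symm, ← h]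
    simp [Psi_one]
  · rw [qstarFun, if_neg h.ne', P.Psi_ne]
    have : 0 < s / lam := div_pos h hlam
    exact ne_of_lt (by linarith)

lemma mem_Icc01 {lam s : ℝ} (hlam : 0 < lam) (hs : 0 ≤ s) (hsl : s ≤ lam) :
    (1 - s / lam) ∈ Set.Icc (0:ℝ) 1 := by
  constructor
  · have : s / lam ≤ 1 := (div_le_one hlam).mpr hsl
    linarith
  · have : 0 ≤ s / lam := div_nonneg hs hlam.le
    linarith

lemma qstar_concaveOn {lam : ℝ} (hlam : 0 < lam) (hP : P.HazardNondec) :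
    ConcaveOn ℝ (Set.Icc (0:ℝ) lam) (qstarFun lam P) := by
  have hpsi := P.psi_concaveOn hP
  refine ⟨convex_Icc _ _, ?_⟩
  intro x hx y hy a b ha hb hab
  have hmem : a • x + b • y ∈ Set.Icc (0:ℝ) lam := (convex_Icc 0 lam) hx hy ha hb hab
  simp only [smul_eq_mul] at hmem ⊢
  rw [P.qstar_eq hlam hx.1, P.qstar_eq hlam hy.1, P.qstar_eq hlam hmem.1]
  have harg : a * (1 - x / lam) + b * (1 - y / lam) = 1 - (a * x + b * y) / lam := by
    have h : a * (1 - x / lam) + b * (1 - y / lam) = (a + b) - (a * x + b * y) / lam := by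
      ring
    rw [h, hab]
  have key := hpsi.2 (mem_Icc01 hlam hx.1 hx.2) (mem_Icc01 hlam hy.1 hy.2) ha hb hab
  simp only [smul_eq_mul] at key
  rw [harg] at key
  have hc : 0 ≤ lam / P.θ := div_nonneg hlam.le P.theta_pos.le
  nlinarith [mul_le_mul_of_nonneg_left key hc]

lemma qstar_convexOn {lam : ℝ} (hlam : 0 < lam) (hP : P.HazardNoninc) :
    ConvexOn ℝ (Set.Icc (0:ℝ) lam) (qstarFun lam P) := by
  have hpsi := P.psi_convexOn hP
  refine ⟨convex_Icc _ _, ?_⟩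
  intro x hx y hy a b ha hb hab
  have hmem : a • x + b • y ∈ Set.Icc (0:ℝ) lam := (convex_Icc 0 lam) hx hy ha hb hab
  simp only [smul_eq_mul] at hmem ⊢
  rw [P.qstar_eq hlam hx.1, P.qstar_eq hlam hy.1, P.qstar_eq hlam hmem.1]
  have harg : a * (1 - x / lam) + b * (1 - y / lam) = 1 - (a * x + b * y) / lam := by
    have h : a * (1 - x / lam) + b * (1 - y / lam) = (a + b) - (a * x + b * y) / lam := by
      ring
    rw [h, hab]
  have key := hpsi.2 (mem_Icc01 hlam hx.1 hx.2) (mem_Icc01 hlam hy.1 hy.2) ha hb hab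
  simp only [smul_eq_mul] at key
  rw [harg] at key
  have hc : 0 ≤ lam / P.θ := div_nonneg hlam.le P.theta_pos.le
  nlinarith [mul_le_mul_of_nonneg_left key hc]

end PatienceDist
lemma Mset_convex {J K : Type*} [Fintype J] [Fintype K] (lam : J → ℝ) (mu : K → ℝ) :
    Convex ℝ (Mset lam mu) := by
  rintro m1 ⟨h1n, h1r, h1c⟩ m2 ⟨h2n, h2r, h2c⟩ a b ha hb hab
  refine ⟨fun p => ?_, fun j => ?_, fun k => ?_⟩
  · simp only [Pi.add_apply, Pi.smul_apply, smul_eq_mul]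
    exact add_nonneg (mul_nonneg ha (h1n p)) (mul_nonneg hb (h2n p))
  · simp only [Pi.add_apply, Pi.smul_apply, smul_eq_mul]
    rw [Finset.sum_add_distrib, ← Finset.mul_sum, ← Finset.mul_sum]
    have e1 := mul_le_mul_of_nonneg_left (h1r j) ha
    have e2 := mul_le_mul_of_nonneg_left (h2r j) hb
    have e3 : a * lam j + b * lam j = lam j := by rw [← add_mul, hab, one_mul]
    linarith
  · simp only [Pi.add_apply, Pi.smul_apply, smul_eq_mul]
    rw [Finset.sum_add_distrib, ← Finset.mul_sum, ← Finset.mul_sum]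
    have e1 := mul_le_mul_of_nonneg_left (h1c k) ha
    have e2 := mul_le_mul_of_nonneg_left (h2c k) hb
    have e3 : a * mu k + b * mu k = mu k := by rw [← add_mul, hab, one_mul]
    linarith

/-- Corollary (convexity of the matching-problem objective): if all patience time
distributions have nondecreasing hazard rates then `Φ` is convex on `𝕄(λ,μ)`; if all
hazard rates are nonincreasing then `Φ` is concave on `𝕄(λ,μ)`. -/
theorem convexity_of_matching_objective
    {J K : Type*} [Fintype J] [Fintype K] [Nonempty J] [Nonempty K]
    (lam : J → ℝ) (mu : K → ℝ) (hlam : ∀ j, 0 < lam j) (hmu : ∀ k, 0 < mu k)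
    (GD : J → PatienceDist) (GS : K → PatienceDist)
    (v : J × K → ℝ) (cD : J → ℝ) (cS : K → ℝ)
    (hv : ∀ p, 0 ≤ v p) (hcD : ∀ j, 0 ≤ cD j) (hcS : ∀ k, 0 ≤ cS k) :
    (((∀ j, (GD j).HazardNondec) ∧ (∀ k, (GS k).HazardNondec)) →
      ConvexOn ℝ (Mset lam mu) (Phi v cD cS lam mu GD GS)) ∧
    (((∀ j, (GD j).HazardNoninc) ∧ (∀ k, (GS k).HazardNoninc)) →
      ConcaveOn ℝ (Mset lam mu) (Phi v cD cS lam mu GD GS)) := by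
  constructor
  · rintro ⟨hHD, hHS⟩
    refine ⟨Mset_convex lam mu, ?_⟩
    intro m1 hm1 m2 hm2 a b ha hb hab
    obtain ⟨h1n, h1r, h1c⟩ := hm1
    obtain ⟨h2n, h2r, h2c⟩ := hm2
    have hsum_j : ∀ j, (∑ k : K, (a • m1 + b • m2) (j, k))
        = a * (∑ k : K, m1 (j, k)) + b * (∑ k : K, m2 (j, k)) := by
      intro j
      simp only [Pi.add_apply, Pi.smul_apply, smul_eq_mul, Finset.sum_add_distrib,
        Finset.mul_sum]
    have hsum_k : ∀ k, (∑ j : J, (a • m1 + b • m2) (j, k))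
        = a * (∑ j : J, m1 (j, k)) + b * (∑ j : J, m2 (j, k)) := by
      intro k
      simp only [Pi.add_apply, Pi.smul_apply, smul_eq_mul, Finset.sum_add_distrib,
        Finset.mul_sum]
    have hL : (∑ p : J × K, v p * (a • m1 + b • m2) p)
        = a * (∑ p : J × K, v p * m1 p) + b * (∑ p : J × K, v p * m2 p) := by
      rw [Finset.mul_sum, Finset.mul_sum, ← Finset.sum_add_distrib]
      refine Finset.sum_congr rfl (fun p _ => ?_)
      simp only [Pi.add_apply, Pi.smul_apply, smul_eq_mul]
      ring
    have hDsum : a * (∑ j : J, cD j * qstarFun (lam j) (GD j) (∑ k : K, m1 (j, k)))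
        + b * (∑ j : J, cD j * qstarFun (lam j) (GD j) (∑ k : K, m2 (j, k)))
        ≤ ∑ j : J, cD j * qstarFun (lam j) (GD j) (∑ k : K, (a • m1 + b • m2) (j, k)) := by
      rw [Finset.mul_sum, Finset.mul_sum, ← Finset.sum_add_distrib]
      refine Finset.sum_le_sum (fun j _ => ?_)
      rw [hsum_j j]
      have hmem1 : (∑ k : K, m1 (j, k)) ∈ Set.Icc (0:ℝ) (lam j) :=
        ⟨Finset.sum_nonneg (fun k _ => h1n (j, k)), h1r j⟩
      have hmem2 : (∑ k : K, m2 (j, k)) ∈ Set.Icc (0:ℝ) (lam j) :=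
        ⟨Finset.sum_nonneg (fun k _ => h2n (j, k)), h2r j⟩
      have key := ((GD j).qstar_concaveOn (hlam j) (hHD j)).2 hmem1 hmem2 ha hb hab
      simp only [smul_eq_mul] at key
      nlinarith [mul_le_mul_of_nonneg_left key (hcD j)]
    have hSsum : a * (∑ k : K, cS k * qstarFun (mu k) (GS k) (∑ j : J, m1 (j, k)))
        + b * (∑ k : K, cS k * qstarFun (mu k) (GS k) (∑ j : J, m2 (j, k)))
        ≤ ∑ k : K, cS k * qstarFun (mu k) (GS k) (∑ j : J, (a • m1 + b • m2) (j, k)) := by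
      rw [Finset.mul_sum, Finset.mul_sum, ← Finset.sum_add_distrib]
      refine Finset.sum_le_sum (fun k _ => ?_)
      rw [hsum_k k]
      have hmem1 : (∑ j : J, m1 (j, k)) ∈ Set.Icc (0:ℝ) (mu k) :=
        ⟨Finset.sum_nonneg (fun j _ => h1n (j, k)), h1c k⟩
      have hmem2 : (∑ j : J, m2 (j, k)) ∈ Set.Icc (0:ℝ) (mu k) :=
        ⟨Finset.sum_nonneg (fun j _ => h2n (j, k)), h2c k⟩
      have key := ((GS k).qstar_concaveOn (hmu k) (hHS k)).2 hmem1 hmem2 ha hb hab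
      simp only [smul_eq_mul] at key
      nlinarith [mul_le_mul_of_nonneg_left key (hcS k)]
    simp only [smul_eq_mul, Phi]
    linarith [hL, hDsum, hSsum]
  · rintro ⟨hHD, hHS⟩
    refine ⟨Mset_convex lam mu, ?_⟩
    intro m1 hm1 m2 hm2 a b ha hb hab
    obtain ⟨h1n, h1r, h1c⟩ := hm1
    obtain ⟨h2n, h2r, h2c⟩ := hm2
    have hsum_j : ∀ j, (∑ k : K, (a • m1 + b • m2) (j, k))
        = a * (∑ k : K, m1 (j, k)) + b * (∑ k : K, m2 (j, k)) := by
      intro j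
      simp only [Pi.add_apply, Pi.smul_apply, smul_eq_mul, Finset.sum_add_distrib,
        Finset.mul_sum]
    have hsum_k : ∀ k, (∑ j : J, (a • m1 + b • m2) (j, k))
        = a * (∑ j : J, m1 (j, k)) + b * (∑ j : J, m2 (j, k)) := by
      intro k
      simp only [Pi.add_apply, Pi.smul_apply, smul_eq_mul, Finset.sum_add_distrib,
        Finset.mul_sum]
    have hL : (∑ p : J × K, v p * (a • m1 + b • m2) p)
        = a * (∑ p : J × K, v p * m1 p) + b * (∑ p : J × K, v p * m2 p) := by
      rw [Finset.mul_sum, Finset.mul_sum, ← Finset.sum_add_distrib]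
      refine Finset.sum_congr rfl (fun p _ => ?_)
      simp only [Pi.add_apply, Pi.smul_apply, smul_eq_mul]
      ring
    have hDsum : (∑ j : J, cD j * qstarFun (lam j) (GD j) (∑ k : K, (a • m1 + b • m2) (j, k)))
        ≤ a * (∑ j : J, cD j * qstarFun (lam j) (GD j) (∑ k : K, m1 (j, k)))
        + b * (∑ j : J, cD j * qstarFun (lam j) (GD j) (∑ k : K, m2 (j, k))) := by
      rw [Finset.mul_sum, Finset.mul_sum, ← Finset.sum_add_distrib]
      refine Finset.sum_le_sum (fun j _ => ?_)
      rw [hsum_j j]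
      have hmem1 : (∑ k : K, m1 (j, k)) ∈ Set.Icc (0:ℝ) (lam j) :=
        ⟨Finset.sum_nonneg (fun k _ => h1n (j, k)), h1r j⟩
      have hmem2 : (∑ k : K, m2 (j, k)) ∈ Set.Icc (0:ℝ) (lam j) :=
        ⟨Finset.sum_nonneg (fun k _ => h2n (j, k)), h2r j⟩
      have key := ((GD j).qstar_convexOn (hlam j) (hHD j)).2 hmem1 hmem2 ha hb hab
      simp only [smul_eq_mul] at key
      nlinarith [mul_le_mul_of_nonneg_left key (hcD j)]
    have hSsum : (∑ k : K, cS k * qstarFun (mu k) (GS k) (∑ j : J, (a • m1 + b • m2) (j, k)))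
        ≤ a * (∑ k : K, cS k * qstarFun (mu k) (GS k) (∑ j : J, m1 (j, k)))
        + b * (∑ k : K, cS k * qstarFun (mu k) (GS k) (∑ j : J, m2 (j, k))) := by
      rw [Finset.mul_sum, Finset.mul_sum, ← Finset.sum_add_distrib]
      refine Finset.sum_le_sum (fun k _ => ?_)
      rw [hsum_k k]
      have hmem1 : (∑ j : J, m1 (j, k)) ∈ Set.Icc (0:ℝ) (mu k) :=
        ⟨Finset.sum_nonneg (fun j _ => h1n (j, k)), h1c k⟩
      have hmem2 : (∑ j : J, m2 (j, k)) ∈ Set.Icc (0:ℝ) (mu k) :=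
        ⟨Finset.sum_nonneg (fun j _ => h2n (j, k)), h2c k⟩
      have key := ((GS k).qstar_convexOn (hmu k) (hHS k)).2 hmem1 hmem2 ha hb hab
      simp only [smul_eq_mul] at key
      nlinarith [mul_le_mul_of_nonneg_left key (hcS k)]
    simp only [smul_eq_mul, Phi]
    linarith [hL, hDsum, hSsum]
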